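/- arXiv:1611.03447 — 8 statements merged into one kernel-verified Lean document; each statement's English description precedes it below -/
import Mathlib

section
/- Let h ⊆ co(V) be a Lie subalgebra of the conformal linear Lie algebra of a pseudo-Euclidean vector space (V,g) with dim V ≥ 3. If there exists a linear form ξ ∈ V* with g(ξ♯, ξ♯) ≠ 0 such that T^ξ belongs to the first prolongation of h (i.e. T^ξ_X ∈ h for every X ∈ V), then h = co(V). -/
/-- The conformal Killing endomorphism `T^ξ_X` associated to the 1-form `ξ = g(s,·)`
(with `ξ♯ = s`): `Z ↦ ξ(X) Z + ξ(Z) X − g(X,Z) ξ♯`. -/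
noncomputable def Txi {V : Type*} [AddCommGroup V] [Module ℝ V]
    (g : LinearMap.BilinForm ℝ V) (s X : V) : Module.End ℝ V :=
  g s X • (LinearMap.id : V →ₗ[ℝ] V) + (g s).smulRight X - (g X).smulRight s

/-- `A` belongs to the conformal linear Lie algebra `co(V) = ℝ·id ⊕ so(V)`. -/
def IsConf {V : Type*} [AddCommGroup V] [Module ℝ V]
    (g : LinearMap.BilinForm ℝ V) (A : Module.End ℝ V) : Prop :=
  ∃ c : ℝ, ∀ X Y : V, g (A X) Y + g X (A Y) = 2 * c * g X Y

attribute [local instance 100] LieRing.ofAssociativeRing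

/-!
The decomposable bivectors `v ∧ w : Z ↦ g(v,Z) w − g(w,Z) v` span `so(V)`. The element `T^ξ_ξ♯` is
`g(ξ♯,ξ♯) · id`, and `T^ξ_X` for `X ⊥ ξ♯` is `ξ♯ ∧ X`, so `h` contains the identity and every
`ξ♯ ∧ X`. The bracket `[T^ξ_X, T^ξ_Y]` equals `g(ξ♯,ξ♯) (X ∧ Y)` modulo such elements, so as
`g(ξ♯,ξ♯) ≠ 0` all of `so(V)`, hence all of `co(V) = ℝ·id ⊕ so(V)`, lies in `h`.
-/

open LinearMap (BilinForm IsSkewAdjoint)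

section Wedge

variable {V : Type*} [AddCommGroup V] [Module ℝ V] (g : BilinForm ℝ V)

noncomputable def wedge (v w : V) : Module.End ℝ V :=
  (g v).smulRight w - (g w).smulRight v

lemma wedge_apply (v w Z : V) : wedge g v w Z = g v Z • w - g w Z • v := rfl

lemma wedge_swap (v w : V) : wedge g v w = -wedge g w v := by
  ext Z; simp [wedge_apply]

lemma Txi_self (s : V) : Txi g s s = g s s • (1 : Module.End ℝ V) := by
  ext Z; simp [Txi]

lemma Txi_sub_smul_eq_wedge {s : V} (hs : g s s ≠ 0) (X : V) :
    Txi g s (X - (g s X / g s s) • s) = wedge g s X := by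
  ext Z
  simp only [Txi, wedge_apply, map_sub, map_smul, LinearMap.sub_apply, LinearMap.add_apply,
    LinearMap.smul_apply, LinearMap.smulRight_apply, LinearMap.id_apply, smul_eq_mul]
  match_scalars <;> field_simp <;> ring

lemma lie_Txi_Txi (hsymm : g.IsSymm) (s X Y : V) :
    ⁅Txi g s X, Txi g s Y⁆ =
      g s X • wedge g Y s + g s Y • wedge g s X + g s s • wedge g X Y := by
  ext Z
  simp only [Txi, wedge_apply, Ring.lie_def, LinearMap.sub_apply, LinearMap.add_apply,
    Module.End.mul_apply, LinearMap.smul_apply, LinearMap.smulRight_apply,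
    LinearMap.id_apply, map_sub, map_add, map_smul]
  rw [hsymm.eq X Y, hsymm.eq X s, hsymm.eq Y s]
  module

/-- With `b'` the `g`-dual basis of `b`, `2 A = ∑ᵢ bᵢ ∧ A b'ᵢ` for skew-adjoint `A`. -/
lemma LinearMap.IsSkewAdjoint.mem_span_wedge [FiniteDimensional ℝ V] (hsymm : g.IsSymm)
    (hnd : g.Nondegenerate) {A : Module.End ℝ V} (hA : IsSkewAdjoint g A) :
    A ∈ Submodule.span ℝ (Set.range fun p : V × V => wedge g p.1 p.2) := by
  let b := Module.finBasis ℝ V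
  let b' := g.dualBasis hnd b
  have expand_b' (x : V) : ∑ i, g (b i) x • b' i = x := by
    simpa only [b', BilinForm.dualBasis_repr_apply, hsymm.eq x] using b'.sum_repr x
  have expand_b (x : V) : ∑ i, g (b' i) x • b i = x := by
    have h := (g.dualBasis hnd b').sum_repr x
    simp only [BilinForm.dualBasis_repr_apply] at h
    simpa only [b', BilinForm.dualBasis_dualBasis hnd hsymm, hsymm.eq x] using h
  have hsum : A = (2 : ℝ)⁻¹ • ∑ i, wedge g (b i) (A (b' i)) := by
    ext Z
    have h2 : ∑ i, wedge g (b i) (A (b' i)) Z = A Z + A Z := by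
      simp only [wedge_apply, hA _ Z, Pi.neg_apply, map_neg, neg_smul, sub_neg_eq_add,
        Finset.sum_add_distrib, ← map_smul, ← map_sum, expand_b', expand_b]
    rw [LinearMap.smul_apply, LinearMap.sum_apply, h2]
    module
  rw [hsum]
  exact Submodule.smul_mem _ _ <| Submodule.sum_mem _ fun i _ =>
    Submodule.subset_span ⟨(b i, A (b' i)), rfl⟩

lemma IsConf.exists_isSkewAdjoint_sub_smul_one (hsymm : g.IsSymm) {A : Module.End ℝ V}
    (hA : IsConf g A) : ∃ c : ℝ, IsSkewAdjoint g ⇑(A - c • 1 : Module.End ℝ V) := by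
  obtain ⟨c, hc⟩ := hA
  refine ⟨c, fun X Y => ?_⟩
  have := hc X Y
  simp only [Pi.neg_apply, LinearMap.sub_apply, LinearMap.smul_apply, Module.End.one_apply,
    map_sub, map_smul, map_neg, smul_eq_mul]
  rw [hsymm.eq X Y] at this ⊢
  linarith

end Wedge

section Prolongation

variable {V : Type*} [AddCommGroup V] [Module ℝ V] {g : BilinForm ℝ V}
  {h : LieSubalgebra ℝ (Module.End ℝ V)} {s : V}

lemma one_mem_of_Txi_mem (hs : g s s ≠ 0) (hT : ∀ X, Txi g s X ∈ h) :
    (1 : Module.End ℝ V) ∈ h := by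
  simpa [Txi_self, smul_smul, inv_mul_cancel₀ hs] using h.smul_mem (g s s)⁻¹ (hT s)

lemma wedge_mem_of_Txi_mem (hsymm : g.IsSymm) (hs : g s s ≠ 0) (hT : ∀ X, Txi g s X ∈ h)
    (X Y : V) : wedge g X Y ∈ h := by
  have hsX (X : V) : wedge g s X ∈ h := Txi_sub_smul_eq_wedge g hs X ▸ hT _
  have hYs : wedge g Y s ∈ h := wedge_swap g Y s ▸ h.neg_mem (hsX Y)
  have key : wedge g X Y = (g s s)⁻¹ •
      (⁅Txi g s X, Txi g s Y⁆ - g s X • wedge g Y s - g s Y • wedge g s X) := by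
    have cancel (a b c : Module.End ℝ V) : a + b + c - a - b = c := by abel
    rw [lie_Txi_Txi g hsymm, cancel, smul_smul, inv_mul_cancel₀ hs, one_smul]
  rw [key]
  exact h.smul_mem _ <| h.sub_mem (h.sub_mem (h.lie_mem (hT X) (hT Y)) (h.smul_mem _ hYs))
    (h.smul_mem _ (hsX X))

end Prolongation

theorem subalgebra_with_nondegenerate_prolongation_is_co_general
    {V : Type*} [AddCommGroup V] [Module ℝ V] [FiniteDimensional ℝ V]
    (g : LinearMap.BilinForm ℝ V) (hsymm : g.IsSymm) (hnd : g.Nondegenerate)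
    (h : LieSubalgebra ℝ (Module.End ℝ V))
    (hco : ∀ A ∈ h, IsConf g A)
    (s : V) (hs : g s s ≠ 0)
    (hT : ∀ X : V, Txi g s X ∈ h) :
    ∀ A : Module.End ℝ V, A ∈ h ↔ IsConf g A := by
  intro A
  refine ⟨hco A, fun hA => ?_⟩
  obtain ⟨c, hskew⟩ := hA.exists_isSkewAdjoint_sub_smul_one g hsymm
  have hspan : Submodule.span ℝ (Set.range fun p : V × V => wedge g p.1 p.2) ≤ h.toSubmodule :=
    Submodule.span_le.mpr <| Set.range_subset_iff.mpr fun p =>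
      wedge_mem_of_Txi_mem hsymm hs hT p.1 p.2
  have hA' : A - c • 1 ∈ h := hspan (IsSkewAdjoint.mem_span_wedge g hsymm hnd hskew)
  simpa using h.add_mem hA' (h.smul_mem c (one_mem_of_Txi_mem hs hT))

/-- If a Lie subalgebra `h ⊆ co(V)` of a pseudo-Euclidean space of dimension ≥ 3 has
`T^ξ` in its first prolongation for some `ξ` with `g(ξ♯,ξ♯) ≠ 0`, then `h = co(V)`. -/
theorem subalgebra_with_nondegenerate_prolongation_is_co
    {V : Type*} [AddCommGroup V] [Module ℝ V] [FiniteDimensional ℝ V]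
    (g : LinearMap.BilinForm ℝ V) (hsymm : g.IsSymm) (hnd : g.Nondegenerate)
    (hdim : 3 ≤ Module.finrank ℝ V)
    (h : LieSubalgebra ℝ (Module.End ℝ V))
    (hco : ∀ A ∈ h, IsConf g A)
    (s : V) (hs : g s s ≠ 0)
    (hT : ∀ X : V, Txi g s X ∈ h) :
    ∀ A : Module.End ℝ V, A ∈ h ↔ IsConf g A :=
  subalgebra_with_nondegenerate_prolongation_is_co_general g hsymm hnd h hco s hs hT
end

section
/- Let (V,g) be a real vector space of dimension ≥ 3 with a positive definite inner product g, and let h ⊆ co(V) be a Lie subalgebra. If there exists a nonzero linear form ξ ∈ V* such that T^ξ belongs to the first prolongation of h, then h = co(V). (Hence every proper subalgebra of co(V) has trivial first prolongation in the Riemannian case.) -/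
attribute [local instance 100] LieRing.ofAssociativeRing

/-!
Write `a ∧ b` for `g.wedge a b : Z ↦ g(a, Z) b - g(b, Z) a`. Then `T^ξ_ξ♯ = g(ξ♯, ξ♯) id` and
`T^ξ_X - ξ(X) id = ξ♯ ∧ X`, so a subalgebra containing all `T^ξ_X` with `g(ξ♯, ξ♯) ≠ 0` contains
`id` and every `ξ♯ ∧ X`. The bracket `⁅ξ♯ ∧ X, ξ♯ ∧ Y⁆ = g(ξ♯, ξ♯) X ∧ Y + (terms ξ♯ ∧ _)` then
yields every `X ∧ Y`, and these span `so(V)`: for a skew `A` and `g`-dual bases `bᵢ`, `dᵢ` one has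
`2A = ∑ᵢ dᵢ ∧ A bᵢ`. Hence `co(V) = ℝ id ⊕ so(V) ⊆ h`.
-/

namespace LinearMap.BilinForm

variable {V : Type*} [AddCommGroup V] [Module ℝ V] (g : LinearMap.BilinForm ℝ V)

def wedge (a b : V) : Module.End ℝ V :=
  (g a).smulRight b - (g b).smulRight a

@[simp]
lemma wedge_apply (a b Z : V) : g.wedge a b Z = g a Z • b - g b Z • a := rfl

lemma Txi_self (s : V) : Txi g s s = g s s • LinearMap.id := by
  simp [Txi]

lemma Txi_sub_smul_id (s X : V) : Txi g s X - g s X • LinearMap.id = g.wedge s X := by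
  ext Z
  simp only [Txi, LinearMap.sub_apply, LinearMap.add_apply, LinearMap.smul_apply,
    LinearMap.smulRight_apply, LinearMap.id_apply, wedge_apply]
  abel

lemma lie_wedge_wedge (hsymm : g.IsSymm) (s X Y : V) :
    ⁅g.wedge s X, g.wedge s Y⁆ =
      g s s • g.wedge X Y + g s Y • g.wedge s X - g s X • g.wedge s Y := by
  ext Z
  simp only [Ring.lie_def, LinearMap.sub_apply, LinearMap.add_apply, LinearMap.smul_apply,
    Module.End.mul_apply, wedge_apply, map_sub, map_smul, smul_sub, smul_smul,
    hsymm.eq X s, hsymm.eq Y s, hsymm.eq Y X]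
  module

lemma sub_smul_id_skew_of_isConf {A : Module.End ℝ V} {c : ℝ}
    (hc : ∀ X Y : V, g (A X) Y + g X (A Y) = 2 * c * g X Y) (X Y : V) :
    g ((A - c • LinearMap.id : Module.End ℝ V) X) Y
      + g X ((A - c • LinearMap.id : Module.End ℝ V) Y) = 0 := by
  simp only [LinearMap.sub_apply, LinearMap.smul_apply, LinearMap.id_apply, map_sub, map_smul,
    smul_eq_mul]
  linarith [hc X Y]

section DualBasis

variable (hnd : g.Nondegenerate) (hsymm : g.IsSymm)
  {ι : Type*} [Fintype ι] [DecidableEq ι] (b : Module.Basis ι ℝ V)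

lemma sum_apply_smul_dualBasis (W : V) : ∑ i, g W (b i) • g.dualBasis hnd b i = W := by
  conv_rhs => rw [← (g.dualBasis hnd b).sum_repr W]
  simp only [dualBasis_repr_apply]

include hsymm in
lemma sum_dualBasis_apply_smul (Z : V) : ∑ i, g (g.dualBasis hnd b i) Z • b i = Z := by
  have h := (g.dualBasis hnd (g.dualBasis hnd b)).sum_repr Z
  simp only [dualBasis_repr_apply] at h
  simpa only [g.dualBasis_dualBasis hnd hsymm, hsymm.eq Z] using h

include hsymm in
lemma sum_wedge_dualBasis_of_skew {A : Module.End ℝ V}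
    (hA : ∀ X Y : V, g (A X) Y + g X (A Y) = 0) :
    ∑ i, g.wedge (g.dualBasis hnd b i) (A (b i)) = (2 : ℝ) • A := by
  ext Z
  have hA' : ∀ i, g (A (b i)) Z = -g (A Z) (b i) := fun i => by
    rw [hsymm.eq (A Z)]; linarith [hA (b i) Z]
  have hfirst : ∑ i, g (g.dualBasis hnd b i) Z • A (b i) = A Z := by
    simp only [← map_smul, ← map_sum, g.sum_dualBasis_apply_smul hnd hsymm]
  simp only [LinearMap.sum_apply, wedge_apply, Finset.sum_sub_distrib, hfirst, hA', neg_smul,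
    Finset.sum_neg_distrib, g.sum_apply_smul_dualBasis hnd, LinearMap.smul_apply]
  module

end DualBasis

section Prolongation

variable {g} {h : LieSubalgebra ℝ (Module.End ℝ V)} {s : V} (hss : g s s ≠ 0)
  (hT : ∀ X : V, Txi g s X ∈ h)
include hss hT

lemma id_mem_of_Txi_mem : LinearMap.id ∈ h :=
  (h.toSubmodule.smul_mem_iff hss).mp (Txi_self g s ▸ hT s)

lemma wedge_self_mem_of_Txi_mem (X : V) : g.wedge s X ∈ h :=
  Txi_sub_smul_id g s X ▸ h.sub_mem (hT X) (h.smul_mem _ (id_mem_of_Txi_mem hss hT))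

lemma wedge_mem_of_Txi_mem (hsymm : g.IsSymm) (X Y : V) : g.wedge X Y ∈ h := by
  have hwedge := wedge_self_mem_of_Txi_mem hss hT
  have hlie : g s s • g.wedge X Y = ⁅g.wedge s X, g.wedge s Y⁆ - g s Y • g.wedge s X
      + g s X • g.wedge s Y := by
    rw [g.lie_wedge_wedge hsymm]; abel
  refine (h.toSubmodule.smul_mem_iff hss).mp ?_
  rw [LieSubalgebra.mem_toSubmodule, hlie]
  exact h.add_mem (h.sub_mem (h.lie_mem (hwedge X) (hwedge Y)) (h.smul_mem _ (hwedge X)))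
    (h.smul_mem _ (hwedge Y))

lemma mem_of_skew_of_Txi_mem [FiniteDimensional ℝ V] (hnd : g.Nondegenerate) (hsymm : g.IsSymm)
    {A : Module.End ℝ V} (hA : ∀ X Y : V, g (A X) Y + g X (A Y) = 0) : A ∈ h := by
  let b := Module.finBasis ℝ V
  refine (h.toSubmodule.smul_mem_iff (two_ne_zero' ℝ)).mp ?_
  rw [← g.sum_wedge_dualBasis_of_skew hnd hsymm b hA]
  exact h.toSubmodule.sum_mem fun i _ => wedge_mem_of_Txi_mem hss hT hsymm _ _

lemma mem_of_isConf_of_Txi_mem [FiniteDimensional ℝ V] (hnd : g.Nondegenerate)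
    (hsymm : g.IsSymm) {A : Module.End ℝ V} (hA : IsConf g A) : A ∈ h := by
  obtain ⟨c, hc⟩ := hA
  have hskew : A - c • LinearMap.id ∈ h :=
    mem_of_skew_of_Txi_mem hss hT hnd hsymm (g.sub_smul_id_skew_of_isConf hc)
  simpa using h.add_mem hskew (h.smul_mem c (id_mem_of_Txi_mem hss hT))

end Prolongation

end LinearMap.BilinForm

theorem riemannian_subalgebra_with_nontrivial_prolongation_is_co_general
    {V : Type*} [AddCommGroup V] [Module ℝ V] [FiniteDimensional ℝ V]
    (g : LinearMap.BilinForm ℝ V) (hsymm : g.IsSymm)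
    (hpos : ∀ x : V, x ≠ 0 → 0 < g x x)
    (h : LieSubalgebra ℝ (Module.End ℝ V))
    (hco : ∀ A ∈ h, IsConf g A)
    (s : V) (hs : s ≠ 0)
    (hT : ∀ X : V, Txi g s X ∈ h) :
    ∀ A : Module.End ℝ V, A ∈ h ↔ IsConf g A := by
  have hnd : g.Nondegenerate := hsymm.isRefl.nondegenerate_iff_separatingLeft.mpr fun x hx => by
    by_contra hx0
    exact (hpos x hx0).ne' (hx x)
  exact fun A => ⟨hco A, g.mem_of_isConf_of_Txi_mem (hpos s hs).ne' hT hnd hsymm⟩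

/-- In the Riemannian (positive definite) case, if a Lie subalgebra `h ⊆ co(V)`
(`dim V ≥ 3`) has `T^ξ` in its first prolongation for some nonzero `ξ`, then `h = co(V)`;
hence every proper subalgebra of `co(V)` has trivial first prolongation. -/
theorem riemannian_subalgebra_with_nontrivial_prolongation_is_co
    {V : Type*} [AddCommGroup V] [Module ℝ V] [FiniteDimensional ℝ V]
    (g : LinearMap.BilinForm ℝ V) (hsymm : g.IsSymm)
    (hpos : ∀ x : V, x ≠ 0 → 0 < g x x)
    (hdim : 3 ≤ Module.finrank ℝ V)
    (h : LieSubalgebra ℝ (Module.End ℝ V))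
    (hco : ∀ A ∈ h, IsConf g A)
    (s : V) (hs : s ≠ 0)
    (hT : ∀ X : V, Txi g s X ∈ h) :
    ∀ A : Module.End ℝ V, A ∈ h ↔ IsConf g A :=
  riemannian_subalgebra_with_nontrivial_prolongation_is_co_general g hsymm hpos h hco s hs hT
end

section
/- The first prolongation of co(V) is V*: if dim V ≥ 3 and S : V × V → V is a symmetric bilinear map such that for every X ∈ V the endomorphism Y ↦ S(X,Y) lies in co(V) (i.e. there is λ(X) ∈ ℝ with g(S(X,Y),Z) + g(Y,S(X,Z)) = 2λ(X)g(Y,Z) for all Y,Z), then there exists a linear form ξ ∈ V* such that S(X,Y) = ξ(X)Y + ξ(Y)X − g(X,Y)ξ♯ for all X,Y ∈ V. -/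
/-!
The conformal factor `λ(X)` of `S_X` is linear in `X`, since it can be read off from a single
pair `Y₀, Z₀` with `g Y₀ Z₀ ≠ 0`. With `ξ = λ` and `s = ξ♯`, the difference
`T(X,Y) = S(X,Y) − (ξ(X)Y + ξ(Y)X − g(X,Y)s)` is symmetric and every `T_X` is `g`-skew, so
`g(T(X,Y),Z)` is symmetric in its first two and skew in its last two arguments. Alternating six
such transpositions returns to the start with a sign change, so it vanishes: `so(V)` has
zero first prolongation.
-/

theorem eq_zero_of_symm_left_of_antisymm_right {K α : Type*} [Field K] [NeZero (2 : K)]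
    {A : α → α → α → K} (hsymm : ∀ X Y Z, A X Y Z = A Y X Z)
    (hanti : ∀ X Y Z, A X Y Z = -A X Z Y) (X Y Z : α) :
    A X Y Z = 0 := by
  have h : A X Y Z = -A X Y Z :=
    calc A X Y Z = A Y X Z := hsymm X Y Z
      _ = -A Y Z X := hanti Y X Z
      _ = -A Z Y X := by rw [hsymm Y Z X]
      _ = A Z X Y := by rw [hanti Z Y X, neg_neg]
      _ = A X Z Y := hsymm Z X Y
      _ = -A X Y Z := by rw [hanti X Z Y]
  have h2 : (2 : K) * A X Y Z = 0 := by linear_combination h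
  exact (mul_eq_zero.mp h2).resolve_left two_ne_zero

namespace LinearMap.BilinForm

variable {K V : Type*} [Field K] [AddCommGroup V] [Module K V]

theorem eq_zero_of_symm_of_isSkew [NeZero (2 : K)] {g : LinearMap.BilinForm K V}
    (hg : g.IsSymm) (hsep : LinearMap.SeparatingLeft g) {T : V → V → V}
    (hT : ∀ X Y, T X Y = T Y X)
    (hskew : ∀ X Y Z, g (T X Y) Z + g Y (T X Z) = 0) (X Y : V) :
    T X Y = 0 :=
  hsep _ fun Z => eq_zero_of_symm_left_of_antisymm_right (A := fun X Y Z => g (T X Y) Z)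
    (fun X Y Z => by simp only [hT X Y])
    (fun X Y Z => by rw [← hg.eq Y, eq_neg_iff_add_eq_zero]; exact hskew X Y Z) X Y Z

theorem exists_linear_conformalFactor [NeZero (2 : K)] (g : LinearMap.BilinForm K V)
    (S : V →ₗ[K] V →ₗ[K] V)
    (hconf : ∀ X, ∃ c : K, ∀ Y Z, g (S X Y) Z + g Y (S X Z) = 2 * c * g Y Z) :
    ∃ ξ : Module.Dual K V, ∀ X Y Z, g (S X Y) Z + g Y (S X Z) = 2 * ξ X * g Y Z := by
  by_cases hg : ∃ Y₀ Z₀, g Y₀ Z₀ ≠ 0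
  · obtain ⟨Y₀, Z₀, h₀⟩ := hg
    let ξ : Module.Dual K V :=
      (2 * g Y₀ Z₀)⁻¹ • ((g.flip Z₀).comp (S.flip Y₀) + (g Y₀).comp (S.flip Z₀))
    refine ⟨ξ, fun X => ?_⟩
    obtain ⟨c, hc⟩ := hconf X
    have hξc : ξ X = c := by
      change (2 * g Y₀ Z₀)⁻¹ * (g (S X Y₀) Z₀ + g Y₀ (S X Z₀)) = c
      rw [hc Y₀ Z₀]
      field_simp
    rwa [hξc]
  · push Not at hg
    exact ⟨0, by simp [hg]⟩

/-- `(X, Y) ↦ ξ(X)Y + ξ(Y)X − g(X,Y)ξ♯` with `ξ = g s`, i.e. `ξ♯ = s`. -/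
def conformalProlongation (g : LinearMap.BilinForm K V) (s X Y : V) : V :=
  g s X • Y + g s Y • X - g X Y • s

variable {g : LinearMap.BilinForm K V}

theorem conformalProlongation_comm (hg : g.IsSymm) (s X Y : V) :
    g.conformalProlongation s X Y = g.conformalProlongation s Y X := by
  rw [conformalProlongation, conformalProlongation, hg.eq X Y, add_comm (g s X • Y)]

theorem conformalProlongation_isConformal (hg : g.IsSymm) (s X Y Z : V) :
    g (g.conformalProlongation s X Y) Z + g Y (g.conformalProlongation s X Z) =
      2 * g s X * g Y Z := by
  simp only [conformalProlongation, map_add, map_sub, map_smul, LinearMap.add_apply,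
    LinearMap.sub_apply, LinearMap.smul_apply, smul_eq_mul, hg.eq Y X, hg.eq Y s]
  ring

end LinearMap.BilinForm

theorem first_prolongation_of_co_eq_dual_general
    {V : Type*} [AddCommGroup V] [Module ℝ V] [FiniteDimensional ℝ V]
    (g : LinearMap.BilinForm ℝ V) (hsymm : g.IsSymm) (hnd : g.Nondegenerate)
    (S : V →ₗ[ℝ] V →ₗ[ℝ] V)
    (hSsymm : ∀ X Y : V, S X Y = S Y X)
    (hconf : ∀ X : V, ∃ c : ℝ, ∀ Y Z : V, g (S X Y) Z + g Y (S X Z) = 2 * c * g Y Z) :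
    ∃ s : V, ∀ X Y : V, S X Y = g s X • Y + g s Y • X - g X Y • s := by
  obtain ⟨ξ, hξ⟩ := g.exists_linear_conformalFactor S hconf
  set s := (g.toDual hnd).symm ξ
  have hs : ∀ X, g s X = ξ X := LinearMap.BilinForm.apply_toDual_symm_apply ξ
  refine ⟨s, fun X Y => sub_eq_zero.mp ?_⟩
  refine LinearMap.BilinForm.eq_zero_of_symm_of_isSkew hsymm hnd.1
    (T := fun X Y => S X Y - g.conformalProlongation s X Y) (fun X Y => ?_) (fun X Y Z => ?_) X Y
  · rw [hSsymm, LinearMap.BilinForm.conformalProlongation_comm hsymm]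
  · simp only [map_sub, LinearMap.sub_apply]
    have hSX := hξ X Y Z
    rw [← hs, ← LinearMap.BilinForm.conformalProlongation_isConformal hsymm] at hSX
    linear_combination hSX

/-- The first prolongation of `co(V)` is `V*` (for `dim V ≥ 3`): a symmetric bilinear map
`S : V × V → V` all of whose partial maps `Y ↦ S(X,Y)` lie in `co(V)` is of the form
`S(X,Y) = ξ(X)Y + ξ(Y)X − g(X,Y)ξ♯` for some 1-form `ξ = g(s,·)` with `ξ♯ = s`. -/
theorem first_prolongation_of_co_eq_dual
    {V : Type*} [AddCommGroup V] [Module ℝ V] [FiniteDimensional ℝ V]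
    (g : LinearMap.BilinForm ℝ V) (hsymm : g.IsSymm) (hnd : g.Nondegenerate)
    (hdim : 3 ≤ Module.finrank ℝ V)
    (S : V →ₗ[ℝ] V →ₗ[ℝ] V)
    (hSsymm : ∀ X Y : V, S X Y = S Y X)
    (hconf : ∀ X : V, ∃ c : ℝ, ∀ Y Z : V, g (S X Y) Z + g Y (S X Z) = 2 * c * g Y Z) :
    ∃ s : V, ∀ X Y : V, S X Y = g s X • Y + g s Y • X - g X Y • s :=
  first_prolongation_of_co_eq_dual_general g hsymm hnd S hSsymm hconf
end

section
/- Let (V,g) be a pseudo-Euclidean vector space with dim V ≥ 3 and let h ⊊ co(V) be a proper Lie subalgebra. Then the set P := {ξ♯ : ξ ∈ V* and T^ξ belongs to the first prolongation of h} is a totally isotropic linear subspace of V; in particular g(ξ♯, η♯) = 0 whenever T^ξ and T^η belong to the first prolongation of h. -/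
attribute [local instance 100] LieRing.ofAssociativeRing

/-!
If `ξ♯ = s` and `η♯ = t` lie in `P`, the bracket identity
`⁅T^s_X, T^t_Y⁆ = T^t_{T^s_X Y} - g(s,X) T^t_Y - g(t,X) T^s_Y + g(s,t) T^X_Y`
puts `g(s,t) T^X_Y` in `h` for all `X, Y`. If `g(s,t) ≠ 0`, then every `T^u_X` lies in `h`;
since `T^u_X + T^X_u = 2 g(u,X) id` and the `T^u_X - T^X_u` span `so(V)`, this forces
`co(V) ⊆ h`, contradicting properness.
-/

namespace Txi

variable {V : Type*} [AddCommGroup V] [Module ℝ V] (g : LinearMap.BilinForm ℝ V)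

lemma apply (s X Z : V) : Txi g s X Z = g s X • Z + g s Z • X - g X Z • s := by
  simp [Txi]

noncomputable def linearLeft (X : V) : V →ₗ[ℝ] Module.End ℝ V where
  toFun s := Txi g s X
  map_add' s t := by ext Z; simp only [apply, map_add, LinearMap.add_apply]; module
  map_smul' a s := by
    ext Z; simp only [apply, map_smul, LinearMap.smul_apply, RingHom.id_apply]; module

section Symm

variable {g} (hsymm : g.IsSymm)
include hsymm

lemma lie (s t X Y : V) :
    ⁅Txi g s X, Txi g t Y⁆ = Txi g t (Txi g s X Y) - g s X • Txi g t Y - g t X • Txi g s Y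
      + g s t • Txi g X Y := by
  ext Z
  simp only [Ring.lie_def, LinearMap.sub_apply, LinearMap.add_apply, LinearMap.smul_apply,
    Module.End.mul_apply, apply, map_add, map_sub, map_smul, smul_eq_mul,
    hsymm.eq t s, hsymm.eq X t, hsymm.eq Y X, hsymm.eq Y s]
  match_scalars <;> ring

lemma add_swap (u X : V) :
    Txi g u X + Txi g X u = (2 * g u X) • (LinearMap.id : Module.End ℝ V) := by
  ext Z
  simp only [apply, LinearMap.add_apply, LinearMap.smul_apply, LinearMap.id_apply,
    hsymm.eq X u, hsymm.eq X Z]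
  module

lemma sub_swap (u X : V) :
    Txi g u X - Txi g X u = (2 : ℝ) • ((g u).smulRight X - (g X).smulRight u) := by
  ext Z
  simp only [apply, LinearMap.sub_apply, LinearMap.smul_apply, LinearMap.smulRight_apply,
    hsymm.eq X u]
  module

end Symm

end Txi

section Expansion

variable {V : Type*} [AddCommGroup V] [Module ℝ V] {g : LinearMap.BilinForm ℝ V}
  (hnd : g.Nondegenerate) {ι : Type*} [Fintype ι] [DecidableEq ι]

lemma sum_apply_smul_dualBasis (b : Module.Basis ι ℝ V) (W : V) :
    ∑ i, g W (b i) • g.dualBasis hnd b i = W := by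
  simpa using (g.dualBasis hnd b).sum_repr W

lemma eq_sum_Txi_sub_swap_of_skew (hsymm : g.IsSymm) (b : Module.Basis ι ℝ V)
    (B : Module.End ℝ V) (hB : ∀ X Y, g (B X) Y = -g X (B Y)) :
    B = (4 : ℝ)⁻¹ • ∑ i, (Txi g (b i) (B (g.dualBasis hnd b i))
      - Txi g (B (g.dualBasis hnd b i)) (b i)) := by
  set d := g.dualBasis hnd b
  have hleft (Z : V) : ∑ i, g (b i) Z • B (d i) = B Z := by
    conv_rhs => rw [← sum_apply_smul_dualBasis hnd b Z, map_sum]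
    simp_rw [map_smul, fun i => hsymm.eq (b i) Z]
    rfl
  have hright (Z : V) : ∑ i, g (B (d i)) Z • b i = -B Z := by
    have := sum_apply_smul_dualBasis hnd d (B Z)
    rw [LinearMap.BilinForm.dualBasis_dualBasis hnd hsymm] at this
    simp_rw [hB, fun i => hsymm.eq (d i) (B Z), neg_smul, Finset.sum_neg_distrib, this]
  simp_rw [Txi.sub_swap hsymm, ← Finset.smul_sum, smul_smul]
  ext Z
  simp only [LinearMap.smul_apply, LinearMap.sum_apply, LinearMap.sub_apply,
    LinearMap.smulRight_apply, Finset.sum_sub_distrib, hleft, hright]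
  module

end Expansion

section Prolongation

variable {V : Type*} [AddCommGroup V] [Module ℝ V] {g : LinearMap.BilinForm ℝ V}
  (h : LieSubalgebra ℝ (Module.End ℝ V))

variable (g) in
/-- The set `P` of the paper. -/
noncomputable def prolongationSharps : Submodule ℝ V :=
  ⨅ X, h.toSubmodule.comap (Txi.linearLeft g X)

lemma mem_prolongationSharps {s : V} : s ∈ prolongationSharps g h ↔ ∀ X, Txi g s X ∈ h := by
  simp [prolongationSharps, Submodule.mem_iInf, Txi.linearLeft]

lemma Txi_mem_of_mem_prolongationSharps (hsymm : g.IsSymm) {s t : V}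
    (hs : s ∈ prolongationSharps g h) (ht : t ∈ prolongationSharps g h) (hst : g s t ≠ 0)
    (X Y : V) : Txi g X Y ∈ h := by
  rw [mem_prolongationSharps] at hs ht
  have hsmul : g s t • Txi g X Y = ⁅Txi g s X, Txi g t Y⁆ - Txi g t (Txi g s X Y)
      + g s X • Txi g t Y + g t X • Txi g s Y := by
    rw [Txi.lie hsymm]; abel
  rw [← h.mem_toSubmodule, ← Submodule.smul_mem_iff _ hst, h.mem_toSubmodule, hsmul]
  exact add_mem (add_mem (sub_mem (h.lie_mem (hs X) (ht Y)) (ht _)) (h.smul_mem _ (ht Y)))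
    (h.smul_mem _ (hs Y))

variable {h} (hsymm : g.IsSymm) (hall : ∀ u X, Txi g u X ∈ h)
include hsymm hall

lemma id_mem_of_forall_Txi_mem (hnd : g.Nondegenerate) : LinearMap.id ∈ h := by
  rcases subsingleton_or_nontrivial V with hV | hV
  · rw [Subsingleton.elim LinearMap.id 0]; exact h.zero_mem
  obtain ⟨v, hv⟩ := exists_ne (0 : V)
  obtain ⟨w, hw⟩ : ∃ w, g v w ≠ 0 := by
    by_contra! hvw
    exact hv (hnd.1 v hvw)
  rw [← h.mem_toSubmodule, ← Submodule.smul_mem_iff _ (mul_ne_zero two_ne_zero hw),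
    h.mem_toSubmodule, ← Txi.add_swap hsymm]
  exact add_mem (hall v w) (hall w v)

lemma mem_of_isConf_of_forall_Txi_mem [FiniteDimensional ℝ V] (hnd : g.Nondegenerate)
    {A : Module.End ℝ V} (hA : IsConf g A) : A ∈ h := by
  obtain ⟨c, hc⟩ := hA
  have hid := id_mem_of_forall_Txi_mem hsymm hall hnd
  set B : Module.End ℝ V := A - c • LinearMap.id with hB
  have hskew : ∀ X Y, g (B X) Y = -g X (B Y) := by
    intro X Y
    simp only [hB, LinearMap.sub_apply, LinearMap.smul_apply, LinearMap.id_apply, map_sub,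
      map_smul, smul_eq_mul]
    linarith [hc X Y]
  have hskew_mem : B ∈ h := by
    rw [eq_sum_Txi_sub_swap_of_skew hnd hsymm (Module.finBasis ℝ V) _ hskew]
    exact h.smul_mem _ (sum_mem fun i _ => sub_mem (hall _ _) (hall _ _))
  simpa [hB] using add_mem hskew_mem (h.smul_mem c hid)

end Prolongation

theorem prolongation_sharps_totally_isotropic_general
    {V : Type*} [AddCommGroup V] [Module ℝ V] [FiniteDimensional ℝ V]
    (g : LinearMap.BilinForm ℝ V) (hsymm : g.IsSymm) (hnd : g.Nondegenerate)
    (h : LieSubalgebra ℝ (Module.End ℝ V))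
    (hproper : ∃ A : Module.End ℝ V, IsConf g A ∧ A ∉ h) :
    (∃ P : Submodule ℝ V, (P : Set V) = {t : V | ∀ X : V, Txi g t X ∈ h}) ∧
      ∀ s t : V, (∀ X : V, Txi g s X ∈ h) → (∀ X : V, Txi g t X ∈ h) → g s t = 0 := by
  refine ⟨⟨prolongationSharps g h, Set.ext fun _ => mem_prolongationSharps h⟩,
    fun s t hs ht => ?_⟩
  by_contra hst
  obtain ⟨A, hA, hAh⟩ := hproper
  have hall := Txi_mem_of_mem_prolongationSharps h hsymm
    ((mem_prolongationSharps h).2 hs) ((mem_prolongationSharps h).2 ht) hst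
  exact hAh (mem_of_isConf_of_forall_Txi_mem hsymm hall hnd hA)

/-- For a proper Lie subalgebra `h ⊊ co(V)` of a pseudo-Euclidean space of dimension
≥ 3, the set `P = {ξ♯ : T^ξ ∈ h^(1)}` is a totally isotropic linear subspace of `V`;
in particular `g(ξ♯,η♯) = 0` whenever `T^ξ, T^η` lie in the first prolongation of `h`. -/
theorem prolongation_sharps_totally_isotropic
    {V : Type*} [AddCommGroup V] [Module ℝ V] [FiniteDimensional ℝ V]
    (g : LinearMap.BilinForm ℝ V) (hsymm : g.IsSymm) (hnd : g.Nondegenerate)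
    (hdim : 3 ≤ Module.finrank ℝ V)
    (h : LieSubalgebra ℝ (Module.End ℝ V))
    (hco : ∀ A ∈ h, IsConf g A)
    (hproper : ∃ A : Module.End ℝ V, IsConf g A ∧ A ∉ h) :
    (∃ P : Submodule ℝ V, (P : Set V) = {t : V | ∀ X : V, Txi g t X ∈ h}) ∧
      ∀ s t : V, (∀ X : V, Txi g s X ∈ h) → (∀ X : V, Txi g t X ∈ h) → g s t = 0 :=
  prolongation_sharps_totally_isotropic_general g hsymm hnd h hproper
end

section
/- Let α, β, γ, δ be pairwise non-proportional linear forms and φ = αβγδ ∈ S⁴. Then conf(φ) = 0; that is, if A ∈ sl₂(ℂ) satisfies A·φ = cφ for some c ∈ ℂ, then A = 0. -/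
open MvPolynomial

/-- The action of `A ∈ sl₂(ℂ)` on `ℂ[x,y]` by derivations:
`A·f = −(a x + c y) ∂f/∂x − (b x + d y) ∂f/∂y` for `A = [[a,b],[c,d]]`. -/
noncomputable def sAct (A : Matrix (Fin 2) (Fin 2) ℂ) (f : MvPolynomial (Fin 2) ℂ) :
    MvPolynomial (Fin 2) ℂ :=
  -((C (A 0 0) * X 0 + C (A 1 0) * X 1) * pderiv 0 f)
    - ((C (A 0 1) * X 0 + C (A 1 1) * X 1) * pderiv 1 f)

/-- A linear form: a nonzero homogeneous degree-1 polynomial in `ℂ[x,y]`. -/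
def IsLinForm (α : MvPolynomial (Fin 2) ℂ) : Prop := α ≠ 0 ∧ α.IsHomogeneous 1

/- ---------- auxiliary machinery ---------- -/

noncomputable def lin (a b : ℂ) : MvPolynomial (Fin 2) ℂ := C a * X 0 + C b * X 1

lemma lin_rep {α : MvPolynomial (Fin 2) ℂ} (h : α.IsHomogeneous 1) :
    ∃ a b : ℂ, α = lin a b := by
  refine ⟨α.coeff (Finsupp.single 0 1), α.coeff (Finsupp.single 1 1), ?_⟩
  ext m
  simp only [lin, coeff_add, coeff_C_mul, coeff_X']
  by_cases h0 : m = Finsupp.single 0 1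
  · subst h0; simp [Finsupp.single_eq_single_iff]
  · by_cases h1 : m = Finsupp.single 1 1
    · subst h1; simp [Finsupp.single_eq_single_iff]
    · rw [if_neg (fun e => h0 e.symm), if_neg (fun e => h1 e.symm)]
      by_contra hc
      have hm : (Finsupp.weight 1) m = 1 := h (by simpa using hc)
      rw [Finsupp.weight_apply, Finsupp.sum_fintype] at hm
      · simp only [Pi.one_apply, smul_eq_mul, mul_one] at hm
        have h2 : m 0 + m 1 = 1 := by
          have := Fin.sum_univ_two (fun i => m i)
          rw [← this]; exact hm
        have : (m 0 = 1 ∧ m 1 = 0) ∨ (m 0 = 0 ∧ m 1 = 1) := by omega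
        rcases this with ⟨u,v⟩ | ⟨u,v⟩
        · exact h0 (by ext i; fin_cases i <;> simp [u, v])
        · exact h1 (by ext i; fin_cases i <;> simp [u, v])
      · intro i; simp

lemma eval_lin (a b : ℂ) (p : Fin 2 → ℂ) : eval p (lin a b) = a * p 0 + b * p 1 := by
  simp [lin]

lemma lin_eq_zero {a b : ℂ} (h : lin a b = 0) : a = 0 ∧ b = 0 := by
  constructor
  · have := congrArg (eval ![1,0]) h; simpa [eval_lin] using this
  · have := congrArg (eval ![0,1]) h; simpa [eval_lin] using this

lemma smul_lin (c a b : ℂ) : c • lin a b = lin (c*a) (c*b) := by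
  simp [lin, smul_add, C_mul, smul_eq_C_mul]; ring

lemma sAct_lin (A : Matrix (Fin 2) (Fin 2) ℂ) (a b : ℂ) :
    sAct A (lin a b) = lin (-(A 0 0 * a + A 0 1 * b)) (-(A 1 0 * a + A 1 1 * b)) := by
  simp [sAct, lin, pderiv_X, Pi.single_apply, map_neg, map_add, C_mul]
  ring

lemma sAct_mul (A : Matrix (Fin 2) (Fin 2) ℂ) (f g : MvPolynomial (Fin 2) ℂ) :
    sAct A (f * g) = sAct A f * g + f * sAct A g := by
  simp only [sAct, pderiv_mul]
  ring

lemma sAct_mul4 (A : Matrix (Fin 2) (Fin 2) ℂ) (f g h k : MvPolynomial (Fin 2) ℂ) :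
    sAct A (f * g * h * k) = sAct A f * g * h * k + f * sAct A g * h * k
      + f * g * sAct A h * k + f * g * h * sAct A k := by
  rw [sAct_mul, sAct_mul, sAct_mul]; ring

lemma cross_ne {a b a' b' : ℂ} (h : ∀ c : ℂ, ¬ (a = c * a' ∧ b = c * b'))
    (h' : ¬ (a' = 0 ∧ b' = 0)) : a * b' - b * a' ≠ 0 := by
  intro hc
  by_cases ha : a' = 0
  · have hb : b' ≠ 0 := fun e => h' ⟨ha, e⟩
    have ha0 : a = 0 := by
      have h2 : a * b' = 0 := by rw [ha] at hc; linear_combination hc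
      exact (mul_eq_zero.1 h2).resolve_right hb
    exact h (b / b') ⟨by rw [ha, ha0]; ring, by field_simp⟩
  · exact h (a / a') ⟨by field_simp, by field_simp; linear_combination -hc⟩

lemma quad_zero {r u w a1 b1 a2 b2 a3 b3 : ℂ}
    (e1 : r * a1^2 + u * a1 * b1 + w * b1^2 = 0)
    (e2 : r * a2^2 + u * a2 * b2 + w * b2^2 = 0)
    (e3 : r * a3^2 + u * a3 * b3 + w * b3^2 = 0)
    (c12 : a1 * b2 - a2 * b1 ≠ 0) (c13 : a1 * b3 - a3 * b1 ≠ 0)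
    (c23 : a2 * b3 - a3 * b2 ≠ 0) : r = 0 ∧ u = 0 ∧ w = 0 := by
  have det : (a1*b2 - a2*b1) * (a1*b3 - a3*b1) * (a2*b3 - a3*b2) ≠ 0 :=
    mul_ne_zero (mul_ne_zero c12 c13) c23
  refine ⟨?_, ?_, ?_⟩
  · have : r * ((a1*b2 - a2*b1) * (a1*b3 - a3*b1) * (a2*b3 - a3*b2)) = 0 := by
      linear_combination (b2*b3*(a2*b3 - a3*b2)) * e1 - (b1*b3*(a1*b3 - a3*b1)) * e2 + (b1*b2*(a1*b2 - a2*b1)) * e3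
    exact (mul_eq_zero.1 this).resolve_right det
  · have : u * ((a1*b2 - a2*b1) * (a1*b3 - a3*b1) * (a2*b3 - a3*b2)) = 0 := by
      linear_combination (-(a2*b3 - a3*b2)*(a2*b3 + a3*b2)) * e1 + ((a1*b3 - a3*b1)*(a1*b3 + a3*b1)) * e2 - ((a1*b2 - a2*b1)*(a1*b2 + a2*b1)) * e3
    exact (mul_eq_zero.1 this).resolve_right det
  · have : w * ((a1*b2 - a2*b1) * (a1*b3 - a3*b1) * (a2*b3 - a3*b2)) = 0 := by
      linear_combination (a2*a3*(a2*b3 - a3*b2)) * e1 - (a1*a3*(a1*b3 - a3*b1)) * e2 + (a1*a2*(a1*b2 - a2*b1)) * e3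
    exact (mul_eq_zero.1 this).resolve_right det

/-- the quadratic equation obtained by evaluating at a zero of the first form -/
lemma eval_key (A : Matrix (Fin 2) (Fin 2) ℂ) (c : ℂ) (a1 b1 a2 b2 a3 b3 a4 b4 : ℂ)
    (h : sAct A (lin a1 b1 * lin a2 b2 * lin a3 b3 * lin a4 b4)
        = c • (lin a1 b1 * lin a2 b2 * lin a3 b3 * lin a4 b4))
    (n2 : a1 * b2 - a2 * b1 ≠ 0) (n3 : a1 * b3 - a3 * b1 ≠ 0) (n4 : a1 * b4 - a4 * b1 ≠ 0) :
    A 1 0 * a1^2 + (A 1 1 - A 0 0) * a1 * b1 - A 0 1 * b1^2 = 0 := by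
  have hev := congrArg (eval ![b1, -a1]) h
  rw [sAct_mul4, sAct_lin, sAct_lin, sAct_lin, sAct_lin, smul_eq_C_mul] at hev
  simp only [map_add, map_mul, eval_C, eval_lin] at hev
  simp only [Matrix.cons_val_zero, Matrix.cons_val_one, Matrix.head_cons] at hev
  have key : (A 1 0 * a1^2 + (A 1 1 - A 0 0) * a1 * b1 - A 0 1 * b1^2)
      * ((a2 * b1 - b2 * a1) * (a3 * b1 - b3 * a1) * (a4 * b1 - b4 * a1)) = 0 := by
    linear_combination hev
  have hne : (a2 * b1 - b2 * a1) * (a3 * b1 - b3 * a1) * (a4 * b1 - b4 * a1) ≠ 0 :=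
    mul_ne_zero (mul_ne_zero (fun e => n2 (by linear_combination -e))
      (fun e => n3 (by linear_combination -e))) (fun e => n4 (by linear_combination -e))
  exact (mul_eq_zero.1 key).resolve_right hne

/-- Petrov type (1111)=(I): for `φ = αβγδ` with `α,β,γ,δ` pairwise non-proportional
linear forms, `conf(φ) = 0`. -/
theorem conf_type_I_eq_zero (α β γ δ : MvPolynomial (Fin 2) ℂ)
    (hα : IsLinForm α) (hβ : IsLinForm β) (hγ : IsLinForm γ) (hδ : IsLinForm δ)
    (hαβ : ∀ c : ℂ, α ≠ c • β) (hαγ : ∀ c : ℂ, α ≠ c • γ) (hαδ : ∀ c : ℂ, α ≠ c • δ)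
    (hβγ : ∀ c : ℂ, β ≠ c • γ) (hβδ : ∀ c : ℂ, β ≠ c • δ) (hγδ : ∀ c : ℂ, γ ≠ c • δ)
    (A : Matrix (Fin 2) (Fin 2) ℂ) (hA : A.trace = 0)
    (c : ℂ) (h : sAct A (α * β * γ * δ) = c • (α * β * γ * δ)) :
    A = 0 := by
  obtain ⟨a1, b1, r1⟩ := lin_rep hα.2
  obtain ⟨a2, b2, r2⟩ := lin_rep hβ.2
  obtain ⟨a3, b3, r3⟩ := lin_rep hγ.2
  obtain ⟨a4, b4, r4⟩ := lin_rep hδ.2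
  subst r1 r2 r3 r4
  have n2 : ¬ (a2 = 0 ∧ b2 = 0) := fun ⟨u,v⟩ => hβ.1 (by simp [lin, u, v])
  have n3 : ¬ (a3 = 0 ∧ b3 = 0) := fun ⟨u,v⟩ => hγ.1 (by simp [lin, u, v])
  have n4 : ¬ (a4 = 0 ∧ b4 = 0) := fun ⟨u,v⟩ => hδ.1 (by simp [lin, u, v])
  have np : ∀ (a b a' b' : ℂ), (∀ e : ℂ, lin a b ≠ e • lin a' b') →
      ∀ e : ℂ, ¬ (a = e * a' ∧ b = e * b') := by
    intro a b a' b' hp e ⟨u, v⟩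
    exact hp e (by rw [smul_lin, u, v])
  have c12 : a1 * b2 - a2 * b1 ≠ 0 :=
    fun e => cross_ne (np _ _ _ _ hαβ) n2 (by linear_combination e)
  have c13 : a1 * b3 - a3 * b1 ≠ 0 :=
    fun e => cross_ne (np _ _ _ _ hαγ) n3 (by linear_combination e)
  have c14 : a1 * b4 - a4 * b1 ≠ 0 :=
    fun e => cross_ne (np _ _ _ _ hαδ) n4 (by linear_combination e)
  have c23 : a2 * b3 - a3 * b2 ≠ 0 :=
    fun e => cross_ne (np _ _ _ _ hβγ) n3 (by linear_combination e)
  have c24 : a2 * b4 - a4 * b2 ≠ 0 :=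
    fun e => cross_ne (np _ _ _ _ hβδ) n4 (by linear_combination e)
  have c34 : a3 * b4 - a4 * b3 ≠ 0 :=
    fun e => cross_ne (np _ _ _ _ hγδ) n4 (by linear_combination e)
  have h2 : sAct A (lin a2 b2 * lin a1 b1 * lin a3 b3 * lin a4 b4)
      = c • (lin a2 b2 * lin a1 b1 * lin a3 b3 * lin a4 b4) := by
    rw [show lin a2 b2 * lin a1 b1 * lin a3 b3 * lin a4 b4
      = lin a1 b1 * lin a2 b2 * lin a3 b3 * lin a4 b4 from by ring]
    exact h
  have h3 : sAct A (lin a3 b3 * lin a1 b1 * lin a2 b2 * lin a4 b4)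
      = c • (lin a3 b3 * lin a1 b1 * lin a2 b2 * lin a4 b4) := by
    rw [show lin a3 b3 * lin a1 b1 * lin a2 b2 * lin a4 b4
      = lin a1 b1 * lin a2 b2 * lin a3 b3 * lin a4 b4 from by ring]
    exact h
  have e1 := eval_key A c a1 b1 a2 b2 a3 b3 a4 b4 h c12 c13 c14
  have e2 := eval_key A c a2 b2 a1 b1 a3 b3 a4 b4 h2
    (fun e => c12 (by linear_combination -e)) c23 c24
  have e3 := eval_key A c a3 b3 a1 b1 a2 b2 a4 b4 h3
    (fun e => c13 (by linear_combination -e)) (fun e => c23 (by linear_combination -e)) c34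
  have tr : A 0 0 + A 1 1 = 0 := by
    simpa [Matrix.trace, Fin.sum_univ_two] using hA
  obtain ⟨hr, hu, hw⟩ := quad_zero (r := A 1 0) (u := A 1 1 - A 0 0) (w := -(A 0 1))
    (a1 := a1) (b1 := b1) (a2 := a2) (b2 := b2) (a3 := a3) (b3 := b3)
    (by linear_combination e1) (by linear_combination e2) (by linear_combination e3)
    c12 c13 c23
  have h00 : A 0 0 = 0 := by linear_combination (hu - tr)/(-2)
  have h11 : A 1 1 = 0 := by linear_combination tr - h00
  have h01 : A 0 1 = 0 := by linear_combination -hw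
  ext i j
  fin_cases i <;> fin_cases j <;> simp [h00, h11, h01, hr]
end

section
/- Let α, β, γ be pairwise non-proportional linear forms and φ = α²βγ ∈ S⁴. Then conf(φ) = 0; that is, if A ∈ sl₂(ℂ) satisfies A·φ = cφ for some c ∈ ℂ, then A = 0. -/
/-!
The action `sAct A` is a derivation `D`, and on linear forms `ℓ_v = v₀x + v₁y` it is
`D ℓ_v = ℓ_{-A v}`. If `D (ℓ^m g) = c ℓ^m g`, cancelling `ℓ^(m-1)` leaves
`ℓ D g + m g D ℓ = c ℓ g`; evaluating at the zero `perp v` of `ℓ_v`, where `g` does not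
vanish, gives `(D ℓ)(perp v) = 0`, i.e. `A v` is proportional to `v`. So `α`, `β`, `γ` give
three pairwise independent eigenvectors of `A` in `ℂ²`, hence `A` is scalar, and trace zero
forces `A = 0`.
-/

open MvPolynomial

open Matrix

section Perp

variable {R : Type*} [CommRing R]

def perp (v : Fin 2 → R) : Fin 2 → R := ![-v 1, v 0]

lemma dotProduct_perp (v w : Fin 2 → R) : v ⬝ᵥ perp w = v 1 * w 0 - v 0 * w 1 := by
  simp only [dotProduct, perp, Fin.sum_univ_two, cons_val_zero, cons_val_one, cons_val_fin_one]
  ring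

lemma dotProduct_perp_self (v : Fin 2 → R) : v ⬝ᵥ perp v = 0 := by
  rw [dotProduct_perp]; ring

lemma dotProduct_perp_comm (v w : Fin 2 → R) : v ⬝ᵥ perp w = -(w ⬝ᵥ perp v) := by
  simp only [dotProduct_perp]; ring

lemma exists_eq_smul_of_dotProduct_perp_eq_zero {K : Type*} [Field K] {v w : Fin 2 → K}
    (hw : w ≠ 0) (h : v ⬝ᵥ perp w = 0) : ∃ c : K, v = c • w := by
  rw [dotProduct_perp] at h
  by_cases h0 : w 0 = 0
  · have h1 : w 1 ≠ 0 := fun h1 => hw (funext (Fin.forall_fin_two.2 ⟨h0, h1⟩))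
    refine ⟨v 1 / w 1, funext (Fin.forall_fin_two.2 ⟨?_, ?_⟩)⟩ <;>
      simp only [Pi.smul_apply, smul_eq_mul] <;> field_simp
    linear_combination -h
  · refine ⟨v 0 / w 0, funext (Fin.forall_fin_two.2 ⟨?_, ?_⟩)⟩ <;>
      simp only [Pi.smul_apply, smul_eq_mul] <;> field_simp
    linear_combination h

end Perp

section LinForm

variable {σ R : Type*} [Fintype σ] [CommRing R]

noncomputable def linForm : (σ → R) →ₗ[R] MvPolynomial σ R := Fintype.linearCombination R X

lemma linForm_apply (v : σ → R) : linForm v = ∑ i, v i • X i := by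
  simp [linForm, Fintype.linearCombination_apply]

lemma eval_linForm (z v : σ → R) : eval z (linForm v) = v ⬝ᵥ z := by
  simp [linForm_apply, dotProduct, smul_eq_C_mul]

lemma exists_linForm_eq_of_isHomogeneous_one {p : MvPolynomial σ R} (hp : p.IsHomogeneous 1) :
    ∃ v : σ → R, linForm v = p := by
  have : p ∈ Submodule.span R (Set.range X) := by
    rw [← homogeneousSubmodule_one_eq_span_X]; exact hp
  simpa [linForm_apply] using (Submodule.mem_span_range_iff_exists_fun R).mp this

end LinForm

noncomputable def sActDerivation (A : Matrix (Fin 2) (Fin 2) ℂ) :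
    Derivation ℂ (MvPolynomial (Fin 2) ℂ) (MvPolynomial (Fin 2) ℂ) :=
  -((C (A 0 0) * X 0 + C (A 1 0) * X 1 : MvPolynomial (Fin 2) ℂ) • pderiv 0
    + (C (A 0 1) * X 0 + C (A 1 1) * X 1 : MvPolynomial (Fin 2) ℂ) • pderiv 1)

lemma sActDerivation_apply (A : Matrix (Fin 2) (Fin 2) ℂ) (f : MvPolynomial (Fin 2) ℂ) :
    sActDerivation A f = sAct A f := by
  simp only [sActDerivation, sAct, Derivation.coe_add, Derivation.coe_neg, Derivation.coe_smul,
    Pi.add_apply, Pi.neg_apply, Pi.smul_apply, smul_eq_mul]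
  ring

lemma sAct_linForm (A : Matrix (Fin 2) (Fin 2) ℂ) (v : Fin 2 → ℂ) :
    sAct A (linForm v) = linForm (-(A *ᵥ v)) := by
  simp only [sAct, linForm_apply, smul_eq_C_mul, Fin.sum_univ_two, map_add, Derivation.leibniz,
    pderiv_X, Pi.single_eq_same, Pi.single_eq_of_ne, one_ne_zero, zero_ne_one, derivation_C,
    smul_eq_mul, mul_one, mul_zero, add_zero, zero_add, ne_eq, not_false_eq_true, mulVec_fin_two,
    neg_cons, neg_empty, cons_val_zero, cons_val_one, cons_val_fin_one, C_neg, C_mul]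
  ring

theorem Derivation.map_apply_eq_zero_of_pow_mul_eq_smul {R S T : Type*} [CommRing R] [CommRing S]
    [IsDomain S] [Algebra R S] [CommRing T] [IsDomain T] (D : Derivation R S S) (f : S →+* T)
    {ℓ g : S} {c : R} {m : ℕ} (hm : (m : T) ≠ 0) (hℓ : ℓ ≠ 0)
    (h : D (ℓ ^ m * g) = c • (ℓ ^ m * g)) (hfℓ : f ℓ = 0) (hfg : f g ≠ 0) : f (D ℓ) = 0 := by
  obtain ⟨n, rfl⟩ := Nat.exists_eq_add_one_of_ne_zero (n := m) (by rintro rfl; simp at hm)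
  rw [D.leibniz, D.leibniz_pow, Algebra.smul_def c] at h
  have hcancel : ℓ * D g + (n + 1) * g * D ℓ = algebraMap R S c * ℓ * g := by
    refine mul_left_cancel₀ (pow_ne_zero n hℓ) ?_
    simp only [smul_eq_mul, nsmul_eq_mul, Nat.add_sub_cancel, Nat.cast_add_one] at h
    linear_combination h
  have hroot : ((n + 1 : ℕ) : T) * f g * f (D ℓ) = 0 := by
    simpa [hfℓ] using congrArg f hcancel
  exact (mul_eq_zero.mp hroot).resolve_left (mul_ne_zero hm hfg)

lemma mulVec_dotProduct_perp_self_eq_zero_of_sAct_eq_smul {A : Matrix (Fin 2) (Fin 2) ℂ}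
    {f g : MvPolynomial (Fin 2) ℂ} {c : ℂ} (h : sAct A f = c • f) {v : Fin 2 → ℂ} {m : ℕ}
    (hm : m ≠ 0) (hv : linForm v ≠ 0) (hf : f = linForm v ^ m * g) (hg : eval (perp v) g ≠ 0) :
    A *ᵥ v ⬝ᵥ perp v = 0 := by
  subst hf
  have hD := (sActDerivation A).map_apply_eq_zero_of_pow_mul_eq_smul (eval (perp v))
    (Nat.cast_ne_zero.mpr hm) hv (by rwa [sActDerivation_apply])
    (by rw [eval_linForm, dotProduct_perp_self]) hg
  rwa [sActDerivation_apply, sAct_linForm, eval_linForm, neg_dotProduct, neg_eq_zero] at hD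

lemma Matrix.exists_eq_smul_one_of_mulVec_dotProduct_perp_self_eq_zero {K : Type*} [Field K]
    (A : Matrix (Fin 2) (Fin 2) K) {u v w : Fin 2 → K} (huv : u ⬝ᵥ perp v ≠ 0)
    (huw : u ⬝ᵥ perp w ≠ 0) (hvw : v ⬝ᵥ perp w ≠ 0) (hu : A *ᵥ u ⬝ᵥ perp u = 0)
    (hv : A *ᵥ v ⬝ᵥ perp v = 0) (hw : A *ᵥ w ⬝ᵥ perp w = 0) : ∃ μ : K, A = μ • 1 := by
  simp only [dotProduct_perp] at huv huw hvw hu hv hw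
  simp only [mulVec, dotProduct, Fin.sum_univ_two] at hu hv hw
  -- Cramer's rule: `hu`, `hv`, `hw` are linear in `(A 1 0, A 1 1 - A 0 0, A 0 1)`, and the
  -- determinant of the system, with rows `(u₀², u₀u₁, u₁²)`, ..., is the product of the minors.
  have hΔ := mul_ne_zero huv (mul_ne_zero huw hvw)
  have h01 : A 0 1 = 0 := mul_right_cancel₀ hΔ <| by
    linear_combination v 0 * w 0 * (v 0 * w 1 - v 1 * w 0) * hu
      - u 0 * w 0 * (u 0 * w 1 - u 1 * w 0) * hv + u 0 * v 0 * (u 0 * v 1 - u 1 * v 0) * hw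
  have h10 : A 1 0 = 0 := mul_right_cancel₀ hΔ <| by
    linear_combination -v 1 * w 1 * (v 0 * w 1 - v 1 * w 0) * hu
      + u 1 * w 1 * (u 0 * w 1 - u 1 * w 0) * hv - u 1 * v 1 * (u 0 * v 1 - u 1 * v 0) * hw
  have h11 : A 1 1 = A 0 0 := mul_right_cancel₀ hΔ <| by
    linear_combination (v 0 * w 1 - v 1 * w 0) * (v 0 * w 1 + v 1 * w 0) * hu
      - (u 0 * w 1 - u 1 * w 0) * (u 0 * w 1 + u 1 * w 0) * hv
      + (u 0 * v 1 - u 1 * v 0) * (u 0 * v 1 + u 1 * v 0) * hw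
  refine ⟨A 0 0, ?_⟩
  ext i j
  fin_cases i <;> fin_cases j <;> simp [h01, h10, h11]

lemma dotProduct_perp_ne_zero_of_forall_ne_smul {K : Type*} [Field K] {v w : Fin 2 → K}
    (hw : linForm w ≠ 0) (h : ∀ c : K, linForm v ≠ c • linForm w) : v ⬝ᵥ perp w ≠ 0 := by
  intro h0
  obtain ⟨c, rfl⟩ := exists_eq_smul_of_dotProduct_perp_eq_zero (by rintro rfl; simp at hw) h0
  exact h c (map_smul linForm c w)

/-- Petrov type (211)=(II): for `φ = α²βγ` with `α,β,γ` pairwise non-proportional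
linear forms, `conf(φ) = 0`. -/
theorem conf_type_II_eq_zero (α β γ : MvPolynomial (Fin 2) ℂ)
    (hα : IsLinForm α) (hβ : IsLinForm β) (hγ : IsLinForm γ)
    (hαβ : ∀ c : ℂ, α ≠ c • β) (hαγ : ∀ c : ℂ, α ≠ c • γ) (hβγ : ∀ c : ℂ, β ≠ c • γ)
    (A : Matrix (Fin 2) (Fin 2) ℂ) (hA : A.trace = 0)
    (c : ℂ) (h : sAct A (α ^ 2 * β * γ) = c • (α ^ 2 * β * γ)) :
    A = 0 := by
  obtain ⟨a, rfl⟩ := exists_linForm_eq_of_isHomogeneous_one hα.2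
  obtain ⟨b, rfl⟩ := exists_linForm_eq_of_isHomogeneous_one hβ.2
  obtain ⟨g, rfl⟩ := exists_linForm_eq_of_isHomogeneous_one hγ.2
  have hab := dotProduct_perp_ne_zero_of_forall_ne_smul hβ.1 hαβ
  have hag := dotProduct_perp_ne_zero_of_forall_ne_smul hγ.1 hαγ
  have hbg := dotProduct_perp_ne_zero_of_forall_ne_smul hγ.1 hβγ
  have hba : b ⬝ᵥ perp a ≠ 0 := by rwa [dotProduct_perp_comm, neg_ne_zero]
  have hga : g ⬝ᵥ perp a ≠ 0 := by rwa [dotProduct_perp_comm, neg_ne_zero]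
  have hgb : g ⬝ᵥ perp b ≠ 0 := by rwa [dotProduct_perp_comm, neg_ne_zero]
  have ha := mulVec_dotProduct_perp_self_eq_zero_of_sAct_eq_smul h two_ne_zero hα.1
    (g := linForm b * linForm g) (by ring)
    (by simp only [map_mul, eval_linForm]; exact mul_ne_zero hba hga)
  have hb := mulVec_dotProduct_perp_self_eq_zero_of_sAct_eq_smul h one_ne_zero hβ.1
    (g := linForm a ^ 2 * linForm g) (by ring)
    (by simp only [map_mul, map_pow, eval_linForm]; exact mul_ne_zero (pow_ne_zero 2 hab) hgb)
  have hg := mulVec_dotProduct_perp_self_eq_zero_of_sAct_eq_smul h one_ne_zero hγ.1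
    (g := linForm a ^ 2 * linForm b) (by ring)
    (by simp only [map_mul, map_pow, eval_linForm]; exact mul_ne_zero (pow_ne_zero 2 hag) hbg)
  obtain ⟨μ, rfl⟩ :=
    A.exists_eq_smul_one_of_mulVec_dotProduct_perp_self_eq_zero hab hag hbg ha hb hg
  have hμ : μ = 0 := by simpa [Matrix.trace_smul] using hA
  simp [hμ]
end

section
/- Let α, β be non-proportional linear forms and φ = α³β ∈ S⁴ (Petrov type (31)). Then aut(φ) = 0, and conf(φ) is a complex subspace of sl₂(ℂ) of dimension 1. -/
open MvPolynomial

lemma key_id (A : Matrix (Fin 2) (Fin 2) ℂ) (p q r s k : ℂ) :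
    sAct A ((C p * X 0 + C q * X 1) ^ 3 * (C r * X 0 + C s * X 1))
      - k • ((C p * X 0 + C q * X 1) ^ 3 * (C r * X 0 + C s * X 1))
    = (C p * X 0 + C q * X 1) ^ 2 *
        (C (-(3*(A 0 0*p + A 0 1*q)*r) - p*(A 0 0*r + A 0 1*s) - k*p*r) * X 0 ^ 2
        + C (-(3*(A 0 0*p + A 0 1*q)*s) - 3*(A 1 0*p + A 1 1*q)*r - p*(A 1 0*r + A 1 1*s)
              - q*(A 0 0*r + A 0 1*s) - k*(p*s + q*r)) * (X 0 * X 1)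
        + C (-(3*(A 1 0*p + A 1 1*q)*s) - q*(A 1 0*r + A 1 1*s) - k*q*s) * X 1 ^ 2) := by
  simp only [sAct, smul_eq_C_mul, pderiv_mul, pderiv_pow, map_add, map_mul, map_neg, map_sub,
    map_ofNat, pderiv_X_self, pderiv_C, pderiv_X_of_ne (by decide : (0:Fin 2) ≠ 1),
    pderiv_X_of_ne (by decide : (1:Fin 2) ≠ 0), Nat.cast_ofNat]
  ring

lemma solve_eqs {p q r s a b c d k : ℂ} (hD : p*s - q*r ≠ 0) (hd : d = -a)
    (hE1 : -(3*(a*p + b*q)*r) - p*(a*r + b*s) - k*p*r = 0)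
    (hE2 : -(3*(a*p + b*q)*s) - 3*(c*p + d*q)*r - p*(c*r + d*s)
            - q*(a*r + b*s) - k*(p*s + q*r) = 0)
    (hE3 : -(3*(c*p + d*q)*s) - q*(c*r + d*s) - k*q*s = 0) :
    2*(p*s-q*r)*a + (p*s+q*r)*k = 0 ∧ (p*s-q*r)*b - p*r*k = 0
      ∧ (p*s-q*r)*c + q*s*k = 0 := by
  subst hd
  have h3D : (3:ℂ)*(p*s-q*r)^2 ≠ 0 := mul_ne_zero three_ne_zero (pow_ne_zero _ hD)
  refine ⟨?_, ?_, ?_⟩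
  · have h : (3:ℂ)*(p*s-q*r)^2 * (2*(p*s-q*r)*a + (p*s+q*r)*k) = 0 := by
      linear_combination (4*q*s*(3*p*s+q*r)) * hE1 - ((3*q*r+p*s)*(3*p*s+q*r)) * hE2
        + (4*p*r*(3*q*r+p*s)) * hE3
    exact (mul_eq_zero.mp h).resolve_left h3D
  · have h : (3:ℂ)*(p*s-q*r)^2 * ((p*s-q*r)*b - p*r*k) = 0 := by
      linear_combination (q*q*r*r-3*p*p*s*s-6*p*q*r*s) * hE1 + (2*p*r*(3*p*s+q*r)) * hE2
        - (8*p*p*r*r) * hE3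
    exact (mul_eq_zero.mp h).resolve_left h3D
  · have h : (3:ℂ)*(p*s-q*r)^2 * ((p*s-q*r)*c + q*s*k) = 0 := by
      linear_combination (8*q*q*s*s) * hE1 - (2*q*s*(3*q*r+p*s)) * hE2
        + (3*q*q*r*r-p*p*s*s+6*p*q*r*s) * hE3
    exact (mul_eq_zero.mp h).resolve_left h3D

lemma linform_repr (f : MvPolynomial (Fin 2) ℂ) (hf : f.IsHomogeneous 1) :
    f = C (coeff (Finsupp.single 0 1) f) * X 0 + C (coeff (Finsupp.single 1 1) f) * X 1 := by
  ext m
  have hcoe : coeff m (C (coeff (Finsupp.single 0 1) f) * X 0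
      + C (coeff (Finsupp.single 1 1) f) * X 1)
      = (if Finsupp.single (0:Fin 2) 1 = m then coeff (Finsupp.single 0 1) f else 0)
      + (if Finsupp.single (1:Fin 2) 1 = m then coeff (Finsupp.single 1 1) f else 0) := by
    simp [coeff_add, coeff_C_mul, coeff_X', mul_ite]
  rw [hcoe]
  by_cases h0 : Finsupp.single (0:Fin 2) 1 = m
  · subst h0; simp [Finsupp.single_eq_single_iff]
  · by_cases h1 : Finsupp.single (1:Fin 2) 1 = m
    · subst h1; simp [Finsupp.single_eq_single_iff]
    · rw [if_neg h0, if_neg h1]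
      by_contra hc
      have hc' : coeff m f ≠ 0 := by simpa using hc
      have hd := hf hc'
      have hsum : m 0 + m 1 = 1 := by
        simpa [Finsupp.weight_apply, Finsupp.sum_fintype, Fin.sum_univ_two] using hd
      have hcases : m 0 = 0 ∧ m 1 = 1 ∨ m 0 = 1 ∧ m 1 = 0 := by omega
      rcases hcases with ⟨ha, hb⟩ | ⟨ha, hb⟩
      · exact h1 (by ext i; fin_cases i <;> simp [Finsupp.single_apply, ha, hb])
      · exact h0 (by ext i; fin_cases i <;> simp [Finsupp.single_apply, ha, hb])

lemma quad_zero_s11 {e1 e2 e3 : ℂ}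
    (h : C e1 * X 0 ^ 2 + C e2 * (X 0 * X 1) + C e3 * X 1 ^ 2 = (0 : MvPolynomial (Fin 2) ℂ)) :
    e1 = 0 ∧ e2 = 0 ∧ e3 = 0 := by
  have h1 := congrArg (eval ![1, 0]) h
  have h2 := congrArg (eval ![0, 1]) h
  have h3 := congrArg (eval ![1, 1]) h
  simp [eval_add, eval_mul, eval_pow] at h1 h2 h3
  exact ⟨h1, by linear_combination h3 - h1 - h2, h2⟩

/-- Petrov type (31)=(III): for `φ = α³β` with `α,β` non-proportional linear forms,
`aut(φ) = 0` and `conf(φ)` is a 1-dimensional complex subspace of `sl₂(ℂ)`. -/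
theorem aut_conf_type_III (α β : MvPolynomial (Fin 2) ℂ)
    (hα : IsLinForm α) (hβ : IsLinForm β) (hαβ : ∀ c : ℂ, α ≠ c • β) :
    (∀ A : Matrix (Fin 2) (Fin 2) ℂ, A.trace = 0 → sAct A (α ^ 3 * β) = 0 → A = 0) ∧
    ∃ S : Submodule ℂ (Matrix (Fin 2) (Fin 2) ℂ),
      (S : Set (Matrix (Fin 2) (Fin 2) ℂ)) =
        {A | A.trace = 0 ∧ ∃ c : ℂ, sAct A (α ^ 3 * β) = c • (α ^ 3 * β)} ∧
      Module.finrank ℂ S = 1 := by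
  obtain ⟨hα0, hα1⟩ := hα
  obtain ⟨hβ0, hβ1⟩ := hβ
  obtain ⟨p, q, hαr⟩ : ∃ p q : ℂ, α = C p * X 0 + C q * X 1 := ⟨_, _, linform_repr α hα1⟩
  obtain ⟨r, s, hβr⟩ : ∃ r s : ℂ, β = C r * X 0 + C s * X 1 := ⟨_, _, linform_repr β hβ1⟩
  have hD : p * s - q * r ≠ 0 := by
    intro h
    have hrs : r ≠ 0 ∨ s ≠ 0 := by
      by_contra hcon
      push_neg at hcon
      exact hβ0 (by rw [hβr, hcon.1, hcon.2]; simp)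
    rcases hrs with hr | hs
    · refine hαβ (p / r) ?_
      have h2 : p / r * s = q := by field_simp; linear_combination h
      rw [hαr, hβr, smul_eq_C_mul]
      calc (C p * X 0 + C q * X 1 : MvPolynomial (Fin 2) ℂ)
            = C (p/r*r) * X 0 + C (p/r*s) * X 1 := by rw [div_mul_cancel₀ p hr, h2]
        _ = C (p/r) * (C r * X 0 + C s * X 1) := by rw [map_mul, map_mul]; ring
    · refine hαβ (q / s) ?_
      have h2 : q / s * r = p := by field_simp; linear_combination -h
      rw [hαr, hβr, smul_eq_C_mul]
      calc (C p * X 0 + C q * X 1 : MvPolynomial (Fin 2) ℂ)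
            = C (q/s*r) * X 0 + C (q/s*s) * X 1 := by rw [div_mul_cancel₀ q hs, h2]
        _ = C (q/s) * (C r * X 0 + C s * X 1) := by rw [map_mul, map_mul]; ring
  have main : ∀ (A : Matrix (Fin 2) (Fin 2) ℂ) (k : ℂ), A.trace = 0 →
      sAct A (α ^ 3 * β) = k • (α ^ 3 * β) →
      2*(p*s-q*r)*(A 0 0) + (p*s+q*r)*k = 0 ∧ (p*s-q*r)*(A 0 1) - p*r*k = 0
        ∧ (p*s-q*r)*(A 1 0) + q*s*k = 0 := by
    intro A k htr hsa
    have hd : A 1 1 = -(A 0 0) := by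
      rw [Matrix.trace_fin_two] at htr
      linear_combination htr
    have hk := key_id A p q r s k
    rw [← hαr, ← hβr, hsa, sub_self] at hk
    have hQ := (mul_eq_zero.mp hk.symm).resolve_left (pow_ne_zero 2 hα0)
    obtain ⟨h1, h2, h3⟩ := quad_zero_s11 hQ
    exact solve_eqs hD hd h1 h2 h3
  constructor
  · intro A htr hsa
    obtain ⟨hF1, hF2, hF3⟩ := main A 0 htr (by rw [hsa, zero_smul])
    have ha : A 0 0 = 0 := by
      have h' : (2*(p*s-q*r)) * A 0 0 = 0 := by linear_combination hF1
      exact (mul_eq_zero.mp h').resolve_left (mul_ne_zero two_ne_zero hD)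
    have hb : A 0 1 = 0 := by
      have h' : (p*s-q*r) * A 0 1 = 0 := by linear_combination hF2
      exact (mul_eq_zero.mp h').resolve_left hD
    have hc : A 1 0 = 0 := by
      have h' : (p*s-q*r) * A 1 0 = 0 := by linear_combination hF3
      exact (mul_eq_zero.mp h').resolve_left hD
    have hd : A 1 1 = 0 := by
      rw [Matrix.trace_fin_two] at htr; linear_combination htr - ha
    ext i j
    fin_cases i <;> fin_cases j <;> simp [ha, hb, hc, hd]
  · set A0 : Matrix (Fin 2) (Fin 2) ℂ := !![-(p*s+q*r), 2*p*r; -2*q*s, p*s+q*r] with hA0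
    have e00 : A0 0 0 = -(p*s+q*r) := by simp [hA0]
    have e01 : A0 0 1 = 2*p*r := by simp [hA0]
    have e10 : A0 1 0 = -2*q*s := by simp [hA0]
    have e11 : A0 1 1 = p*s+q*r := by simp [hA0]
    have hA0ne : A0 ≠ 0 := by
      intro h
      have h01 : A0 0 1 = 0 := by rw [h]; simp
      have h00t : A0 0 0 = 0 := by rw [h]; simp
      have h00 : -(p*s+q*r) = 0 := e00.symm.trans h00t
      apply hD
      have hpr : p*r = 0 := by linear_combination (e01.symm.trans h01)/2
      rcases mul_eq_zero.mp hpr with hp | hr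
      · linear_combination 2*s*hp + h00
      · linear_combination -2*q*hr - h00
    refine ⟨Submodule.span ℂ {A0}, ?_, ?_⟩
    · ext A
      simp only [SetLike.mem_coe, Submodule.mem_span_singleton, Set.mem_setOf_eq]
      constructor
      · rintro ⟨t, rfl⟩
        constructor
        · rw [Matrix.trace_fin_two]
          simp only [Matrix.smul_apply, smul_eq_mul, e00, e11]
          ring
        · refine ⟨2*t*(p*s-q*r), ?_⟩
          have f00 : (t • A0) 0 0 = t * (-(p*s+q*r)) := by
            simp [Matrix.smul_apply, e00]
          have f01 : (t • A0) 0 1 = t * (2*p*r) := by simp [Matrix.smul_apply, e01]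
          have f10 : (t • A0) 1 0 = t * (-2*q*s) := by simp [Matrix.smul_apply, e10]
          have f11 : (t • A0) 1 1 = t * (p*s+q*r) := by simp [Matrix.smul_apply, e11]
          rw [hαr, hβr]
          simp only [sAct, f00, f01, f10, f11, smul_eq_C_mul, pderiv_mul, pderiv_pow,
            map_add, map_mul, map_neg, map_sub, map_ofNat, pderiv_X_self, pderiv_C,
            pderiv_X_of_ne (by decide : (0:Fin 2) ≠ 1),
            pderiv_X_of_ne (by decide : (1:Fin 2) ≠ 0), Nat.cast_ofNat]
          ring
      · rintro ⟨htr, k, hsa⟩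
        obtain ⟨hF1, hF2, hF3⟩ := main A k htr hsa
        have hd : A 1 1 = -(A 0 0) := by
          rw [Matrix.trace_fin_two] at htr
          linear_combination htr
        have h2D : (2:ℂ)*(p*s-q*r) ≠ 0 := mul_ne_zero two_ne_zero hD
        refine ⟨k / (2*(p*s-q*r)), ?_⟩
        have g00 : k/(2*(p*s-q*r)) * (-(p*s+q*r)) = A 0 0 := by
          rw [div_mul_eq_mul_div, div_eq_iff h2D]; linear_combination -hF1
        have g01 : k/(2*(p*s-q*r)) * (2*p*r) = A 0 1 := by
          rw [div_mul_eq_mul_div, div_eq_iff h2D]; linear_combination -2*hF2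
        have g10 : k/(2*(p*s-q*r)) * (-2*q*s) = A 1 0 := by
          rw [div_mul_eq_mul_div, div_eq_iff h2D]; linear_combination -2*hF3
        have g11 : k/(2*(p*s-q*r)) * (p*s+q*r) = A 1 1 := by
          rw [div_mul_eq_mul_div, div_eq_iff h2D]; linear_combination hF1 - 2*(p*s-q*r)*hd
        rw [Matrix.eta_fin_two ((k / (2*(p*s-q*r))) • A0)]
        simp only [Matrix.smul_apply, smul_eq_mul, e00, e01, e10, e11]
        rw [g00, g01, g10, g11]
        exact (Matrix.eta_fin_two A).symm
    · exact finrank_span_singleton hA0ne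
end

section
/- Let E be a finite-dimensional real inner product space and A, J ∈ so(E). A symmetric bilinear map K : E × E → so(E) satisfies K_{e,e'}e'' − K_{e,e''}e' = −2⟨Je',e''⟩e + ⟨Je,e'⟩e'' − ⟨Je,e''⟩e' − ⟨e,e'⟩Ae'' + ⟨e,e''⟩Ae' for all e, e', e'' ∈ E if and only if K_{e,e'} = Je∧e' − e∧Je' + ⟨e,e'⟩(J − A) for all e, e' ∈ E. In particular, this equation has a unique so(E)-valued symmetric bilinear solution K. -/
open RealInnerProductSpace

/-- The skew-symmetric endomorphism `e∧e' : x ↦ ⟨e',x⟩e − ⟨e,x⟩e'` of a real inner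
product space. -/
noncomputable def wedgeE {E : Type*} [NormedAddCommGroup E] [InnerProductSpace ℝ E]
    (e e' : E) : E →ₗ[ℝ] E where
  toFun x := ⟪e', x⟫ • e - ⟪e, x⟫ • e'
  map_add' x y := by
    simp only [inner_add_right, add_smul]
    abel
  map_smul' r x := by
    simp only [inner_smul_right, RingHom.id_apply, smul_sub, smul_smul]

noncomputable def K0 {E : Type*} [NormedAddCommGroup E] [InnerProductSpace ℝ E]
    (A J : E →ₗ[ℝ] E) (e e' : E) : E →ₗ[ℝ] E :=
  wedgeE (J e) e' - wedgeE e (J e') + ⟪e, e'⟫ • (J - A)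

lemma K0_apply {E : Type*} [NormedAddCommGroup E] [InnerProductSpace ℝ E]
    (A J : E →ₗ[ℝ] E) (e e' x : E) :
    K0 A J e e' x = ⟪e', x⟫ • J e - ⟪J e, x⟫ • e'
      - (⟪J e', x⟫ • e - ⟪e, x⟫ • J e') + ⟪e, e'⟫ • (J x - A x) := by
  simp [K0, wedgeE, LinearMap.sub_apply, LinearMap.add_apply, LinearMap.smul_apply]

lemma K0_symm {E : Type*} [NormedAddCommGroup E] [InnerProductSpace ℝ E]
    (A J : E →ₗ[ℝ] E) (e e' : E) : K0 A J e e' = K0 A J e' e := by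
  ext x
  rw [K0_apply, K0_apply, real_inner_comm e' e]
  module

lemma K0_skew {E : Type*} [NormedAddCommGroup E] [InnerProductSpace ℝ E]
    (A J : E →ₗ[ℝ] E)
    (hA : ∀ x y : E, ⟪A x, y⟫ + ⟪x, A y⟫ = 0)
    (hJ : ∀ x y : E, ⟪J x, y⟫ + ⟪x, J y⟫ = 0)
    (e e' x y : E) : ⟪K0 A J e e' x, y⟫ + ⟪x, K0 A J e e' y⟫ = 0 := by
  rw [K0_apply, K0_apply]
  simp only [inner_sub_left, inner_sub_right, inner_add_left, inner_add_right,
    real_inner_smul_left, real_inner_smul_right]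
  linear_combination ⟪e, e'⟫ * hJ x y - ⟪e, e'⟫ * hA x y
    - ⟪J e, y⟫ * real_inner_comm e' x - ⟪J e', y⟫ * real_inner_comm e x
    - ⟪e', y⟫ * real_inner_comm x (J e) - ⟪e, y⟫ * real_inner_comm x (J e')

lemma K0_eqn {E : Type*} [NormedAddCommGroup E] [InnerProductSpace ℝ E]
    (A J : E →ₗ[ℝ] E)
    (hJ : ∀ x y : E, ⟪J x, y⟫ + ⟪x, J y⟫ = 0)
    (e e' e'' : E) :
    K0 A J e e' e'' - K0 A J e e'' e' =
      (-2 * ⟪J e', e''⟫) • e + ⟪J e, e'⟫ • e'' - ⟪J e, e''⟫ • e'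
        - ⟪e, e'⟫ • A e'' + ⟪e, e''⟫ • A e' := by
  rw [K0_apply, K0_apply]
  have h1 : ⟪J e'', e'⟫ = -⟪J e', e''⟫ := by
    have h2 := hJ e' e''
    have h3 := real_inner_comm e' (J e'')
    linarith
  rw [h1, real_inner_comm e'' e']
  module


/-- The equation
`K_{e,e'}e'' − K_{e,e''}e' = −2⟨Je',e''⟩e + ⟨Je,e'⟩e'' − ⟨Je,e''⟩e' − ⟨e,e'⟩Ae'' + ⟨e,e''⟩Ae'`
for a symmetric `so(E)`-valued bilinear map `K` holds iff
`K_{e,e'} = Je∧e' − e∧Je' + ⟨e,e'⟩(J−A)`; in particular it has a unique such solution. -/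
theorem K_equation_unique_solution {E : Type*} [NormedAddCommGroup E]
    [InnerProductSpace ℝ E] [FiniteDimensional ℝ E]
    (A J : E →ₗ[ℝ] E)
    (hA : ∀ x y : E, ⟪A x, y⟫ + ⟪x, A y⟫ = 0)
    (hJ : ∀ x y : E, ⟪J x, y⟫ + ⟪x, J y⟫ = 0)
    (K : E →ₗ[ℝ] E →ₗ[ℝ] (E →ₗ[ℝ] E))
    (hKsymm : ∀ e e' : E, K e e' = K e' e)
    (hKskew : ∀ e e' x y : E, ⟪K e e' x, y⟫ + ⟪x, K e e' y⟫ = 0) :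
    (∀ e e' e'' : E,
        K e e' e'' - K e e'' e' =
          (-2 * ⟪J e', e''⟫) • e + ⟪J e, e'⟫ • e'' - ⟪J e, e''⟫ • e'
            - ⟪e, e'⟫ • A e'' + ⟪e, e''⟫ • A e')
      ↔ (∀ e e' : E, K e e' = wedgeE (J e) e' - wedgeE e (J e') + ⟪e, e'⟫ • (J - A)) := by
  constructor
  · intro heq e₀ e₁
    -- L a b c := K a b c - K0 A J a b c
    have hL2 : ∀ a b c : E, K a b c - K0 A J a b c = K a c b - K0 A J a c b := by
      intro a b c
      have h1 := heq a b c
      have h2 := K0_eqn A J hJ a b c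
      have h3 : K a b c - K a c b = K0 A J a b c - K0 A J a c b := h1.trans h2.symm
      linear_combination (norm := module) h3
    have hLsym : ∀ a b c : E, K a b c - K0 A J a b c = K b a c - K0 A J b a c := by
      intro a b c
      rw [hKsymm a b, K0_symm A J a b]
    have hG13 : ∀ a b c : E, K a b c - K0 A J a b c = K c b a - K0 A J c b a := by
      intro a b c
      rw [hL2 a b c, hLsym a c b, hL2 c a b]
    have hLskew : ∀ a b c d : E,
        ⟪K a b c - K0 A J a b c, d⟫ = -⟪K a b d - K0 A J a b d, c⟫ := by
      intro a b c d
      have h1 := hKskew a b c d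
      have h2 := K0_skew A J hA hJ a b c d
      simp only [inner_sub_left, inner_sub_right] at *
      have hc1 := real_inner_comm c (K a b d)
      have hc2 := real_inner_comm c (K0 A J a b d)
      linarith
    have key : ∀ a b c d : E, ⟪K a b c - K0 A J a b c, d⟫ = 0 := by
      intro a b c d
      have chain : ⟪K a b c - K0 A J a b c, d⟫ = -⟪K a b c - K0 A J a b c, d⟫ := by
        calc ⟪K a b c - K0 A J a b c, d⟫
            = -⟪K a b d - K0 A J a b d, c⟫ := hLskew a b c d
          _ = -⟪K d b a - K0 A J d b a, c⟫ := by rw [hG13 a b d]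
          _ = ⟪K d b c - K0 A J d b c, a⟫ := by rw [hLskew d b a c, neg_neg]
          _ = ⟪K c b d - K0 A J c b d, a⟫ := by rw [hG13 d b c]
          _ = -⟪K c b a - K0 A J c b a, d⟫ := hLskew c b d a
          _ = -⟪K a b c - K0 A J a b c, d⟫ := by rw [hG13 c b a]
      linarith
    have : K e₀ e₁ = K0 A J e₀ e₁ := by
      ext x
      have h := key e₀ e₁ x (K e₀ e₁ x - K0 A J e₀ e₁ x)
      exact sub_eq_zero.mp (inner_self_eq_zero.mp h)
    exact this
  · intro h e e' e''
    have h1 : K e e' = K0 A J e e' := h e e'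
    have h2 : K e e'' = K0 A J e e'' := h e e''
    rw [h1, h2]
    exact K0_eqn A J hJ e e' e''
end
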